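/- arXiv:2303.17346 — 5 statements merged into one kernel-verified Lean document; each statement's English description precedes it below -/
import Mathlib

section
/- Let H be a disconnected graph with no isolated vertices and e = xy an edge of H. Construct U by taking a disjoint copy H' of H, identifying x with its copy x' and y with its copy y', and joining every other vertex of H with every other vertex of H' (i.e., adding all edges between V(H)\{x,y} and V(H')\{x',y'}). Then deleting the edge e from U yields a graph with no induced subgraph isomorphic to H. -/
open SimpleGraph

/-- The graph obtained from a disconnected graph `H` with edge `e = xy` by gluing a
disjoint copy of `H` at `x` and `y` (identifying `x` with its copy and `y` with its copy)
and joining every other vertex of the first copy with every other vertex of the second. -/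
def glueExt {V : Type*} (H : SimpleGraph V) (x y : V) :
    SimpleGraph (V ⊕ {v : V // v ≠ x ∧ v ≠ y}) :=
  SimpleGraph.fromRel (fun p q =>
    match p, q with
    | Sum.inl a, Sum.inl b => H.Adj a b
    | Sum.inr a, Sum.inr b => H.Adj a.1 b.1
    | Sum.inl a, Sum.inr b => (a ≠ x ∧ a ≠ y) ∨ H.Adj a b.1
    | Sum.inr a, Sum.inl b => (b ≠ x ∧ b ≠ y) ∨ H.Adj b a.1)

/-- `G` is `H`-free: no induced subgraph of `G` is isomorphic to `H`. -/
def IsHFree {V W : Type*} (G : SimpleGraph V) (H : SimpleGraph W) : Prop :=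
  ∀ s : Set V, IsEmpty ((G.induce s) ≃g H)

section Aux

variable {V : Type*} {H : SimpleGraph V} {x y : V}

lemma gA (a b : V) :
    ((glueExt H x y).deleteEdges {s(Sum.inl x, Sum.inl y)}).Adj (Sum.inl a) (Sum.inl b) ↔
      H.Adj a b ∧ ¬(a = x ∧ b = y) ∧ ¬(a = y ∧ b = x) := by
  simp only [deleteEdges_adj, glueExt, fromRel_adj, Set.mem_singleton_iff, Sym2.eq_iff,
    Sum.inl.injEq, ne_eq, H.adj_comm b a, or_self]
  constructor
  · rintro ⟨⟨-, h⟩, h2⟩; exact ⟨h, by tauto, by tauto⟩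
  · rintro ⟨h, h1, h2⟩; exact ⟨⟨fun e => h.ne e, h⟩, by tauto⟩

lemma gAB (a : V) (b : {v : V // v ≠ x ∧ v ≠ y}) :
    ((glueExt H x y).deleteEdges {s(Sum.inl x, Sum.inl y)}).Adj (Sum.inl a) (Sum.inr b) ↔
      ((a ≠ x ∧ a ≠ y) ∨ H.Adj a b.1) := by
  simp [glueExt, fromRel_adj, Sym2.eq_iff, H.adj_comm a b.1]

lemma gBB (a b : {v : V // v ≠ x ∧ v ≠ y}) :
    ((glueExt H x y).deleteEdges {s(Sum.inl x, Sum.inl y)}).Adj (Sum.inr a) (Sum.inr b) ↔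
      H.Adj a.1 b.1 := by
  simp only [deleteEdges_adj, glueExt, fromRel_adj, Set.mem_singleton_iff, Sym2.eq_iff,
    H.adj_comm b.1 a.1, or_self, ne_eq]
  constructor
  · tauto
  · intro h
    refine ⟨⟨fun e => h.ne (congrArg Subtype.val (Sum.inr.inj e)), h⟩, by simp⟩

lemma exists_iso_of_range {α β : Type*} [Finite β] (G : SimpleGraph α)
    (K K' : SimpleGraph β) (s : Set α) (φ : (G.induce s) ≃g K)
    (f : β → α) (hinj : Function.Injective f) (hs : s ⊆ Set.range f)
    (hadj : ∀ u v, G.Adj (f u) (f v) ↔ K'.Adj u v) : Nonempty (K' ≃g K) := by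
  have hseq : s = Set.range f := by
    apply Set.eq_of_subset_of_ncard_le hs _ (Set.finite_range f)
    have h1 : Nat.card ↥s = Nat.card β := Nat.card_congr φ.toEquiv
    have h2 : Nat.card ↥(Set.range f) = Nat.card β :=
      Nat.card_congr (Equiv.ofInjective f hinj).symm
    rw [← Nat.card_coe_set_eq, ← Nat.card_coe_set_eq, h1, h2]
  subst hseq
  refine ⟨RelIso.trans ?_ φ⟩
  exact { toEquiv := Equiv.ofInjective f hinj,
          map_rel_iff' := by intro u v; simpa [SimpleGraph.comap] using hadj u v }

lemma no_iso_deleteEdge {β : Type*} [Fintype β] (H : SimpleGraph β) {x y : β}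
    (he : H.Adj x y) : IsEmpty ((H.deleteEdges {s(x, y)}) ≃g H) := by
  classical
  constructor
  intro ψ
  have hcard := ψ.card_edgeFinset_eq
  have hlt : (H.deleteEdges {s(x, y)}).edgeFinset.card < H.edgeFinset.card := by
    apply Finset.card_lt_card
    constructor
    · exact edgeFinset_mono (deleteEdges_le _)
    · intro hsub
      have h1 : s(x, y) ∈ H.edgeFinset := by simp [he]
      have h2 := hsub h1
      simp [mem_edgeFinset] at h2
  omega

end Aux

theorem stmt5 {V : Type*} [Fintype V] (H : SimpleGraph V) (hH : ¬ H.Connected)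
    (hiso : ∀ v : V, ∃ w : V, H.Adj v w) (x y : V) (he : H.Adj x y) :
    IsHFree ((glueExt H x y).deleteEdges {s(Sum.inl x, Sum.inl y)}) H := by
  classical
  intro s
  refine ⟨fun φ => ?_⟩
  set G : SimpleGraph (V ⊕ {v : V // v ≠ x ∧ v ≠ y}) :=
    (glueExt H x y).deleteEdges {s(Sum.inl x, Sum.inl y)} with hGdef
  have hxy : x ≠ y := he.ne
  by_cases hB : ∃ b : {v : V // v ≠ x ∧ v ≠ y}, Sum.inr b ∈ s
  · by_cases hA : ∃ a : V, Sum.inl a ∈ s ∧ a ≠ x ∧ a ≠ y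
    · -- connectivity case
      obtain ⟨a₀, ha₀s, ha₀x, ha₀y⟩ := hA
      obtain ⟨b₀, hb₀s⟩ := hB
      have hnbr : ∀ w : ↥s, ∃ w' : ↥s, (G.induce s).Adj w w' := by
        intro w
        obtain ⟨z, hz⟩ := hiso (φ w)
        exact ⟨φ.symm z, by simpa using φ.symm.map_rel_iff.mpr hz⟩
      have toA : ∀ (t : ↥s),
          ((∃ a, t.1 = Sum.inl a ∧ a ≠ x ∧ a ≠ y) ∨ (∃ b, t.1 = Sum.inr b)) →
          (G.induce s).Reachable t ⟨Sum.inl a₀, ha₀s⟩ := by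
        intro t ht
        rcases ht with ⟨a, hta, hax, hay⟩ | ⟨b, htb⟩
        · have h1 : (G.induce s).Adj t ⟨Sum.inr b₀, hb₀s⟩ := by
            show G.Adj t.1 (Sum.inr b₀)
            rw [hta]
            exact (gAB a b₀).mpr (Or.inl ⟨hax, hay⟩)
          have h2 : (G.induce s).Adj ⟨Sum.inr b₀, hb₀s⟩ ⟨Sum.inl a₀, ha₀s⟩ :=
            ((gAB a₀ b₀).mpr (Or.inl ⟨ha₀x, ha₀y⟩)).symm
          exact h1.reachable.trans h2.reachable
        · have h1 : (G.induce s).Adj t ⟨Sum.inl a₀, ha₀s⟩ := by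
            show G.Adj t.1 (Sum.inl a₀)
            rw [htb]
            exact ((gAB a₀ b).mpr (Or.inl ⟨ha₀x, ha₀y⟩)).symm
          exact h1.reachable
      have key1 : ∀ w : ↥s, (G.induce s).Reachable w ⟨Sum.inl a₀, ha₀s⟩ := by
        intro w
        rcases hw : w.1 with a | b
        · by_cases hax : a ≠ x ∧ a ≠ y
          · exact toA w (Or.inl ⟨a, hw, hax.1, hax.2⟩)
          · obtain ⟨w', hw'⟩ := hnbr w
            have hGadj : G.Adj w.1 w'.1 := hw'
            refine hw'.reachable.trans (toA w' ?_)
            rcases hw2 : w'.1 with c | b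
            · left
              rw [hw, hw2] at hGadj
              rw [hGdef, gA] at hGadj
              obtain ⟨hadj, hne1, hne2⟩ := hGadj
              push_neg at hax
              rcases Classical.em (a = x) with hx | hx
              · exact ⟨c, rfl, fun e => hadj.ne' (e.trans hx.symm),
                  fun e => hne1 ⟨hx, e⟩⟩
              · have hy : a = y := hax hx
                exact ⟨c, rfl, fun e => hne2 ⟨hy, e⟩,
                  fun e => hadj.ne' (e.trans hy.symm)⟩
            · exact Or.inr ⟨b, rfl⟩
        · exact toA w (Or.inr ⟨b, hw⟩)
      haveI : Nonempty ↥s := ⟨⟨Sum.inl a₀, ha₀s⟩⟩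
      have hconn : (G.induce s).Connected :=
        ⟨fun u v => (key1 u).trans (key1 v).symm⟩
      exact hH (φ.connected_iff.mp hconn)
    · -- no inner vertex of first copy: s inside {x,y} ∪ second copy
      push_neg at hA
      set f : V → V ⊕ {v : V // v ≠ x ∧ v ≠ y} := fun v =>
        if h1 : v = x then Sum.inl x else if h2 : v = y then Sum.inl y
        else Sum.inr ⟨v, h1, h2⟩ with hfdef
      have hfx : f x = Sum.inl x := by simp [hfdef]
      have hfy : f y = Sum.inl y := by simp [hfdef, hxy.symm]
      have hfo : ∀ (v : V) (h1 : v ≠ x) (h2 : v ≠ y), f v = Sum.inr ⟨v, h1, h2⟩ := by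
        intro v h1 h2; simp [hfdef, h1, h2]
      have hgf : ∀ v, Sum.elim id Subtype.val (f v) = v := by
        intro v
        by_cases h1 : v = x
        · subst h1; rw [hfx]; rfl
        · by_cases h2 : v = y
          · subst h2; rw [hfy]; rfl
          · rw [hfo v h1 h2]; rfl
      have hinj : Function.Injective f := Function.LeftInverse.injective hgf
      have hs : s ⊆ Set.range f := by
        rintro (a | b) hp
        · rcases Classical.em (a = x) with h | h
          · exact ⟨x, by rw [hfx, h]⟩
          · exact ⟨y, by rw [hfy, hA a hp h]⟩
        · exact ⟨b.1, by rw [hfo b.1 b.2.1 b.2.2]⟩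
      have hadj : ∀ u v, G.Adj (f u) (f v) ↔ (H.deleteEdges {s(x, y)}).Adj u v := by
        intro u v
        by_cases h1 : u = x
        · by_cases h3 : v = x
          · rw [h1, h3]
            exact iff_of_false (fun h => h.ne rfl) (fun h => h.1.ne rfl)
          · by_cases h4 : v = y
            · rw [h1, h4, hfx, hfy, hGdef, gA]
              simp [Sym2.eq_iff]
            · rw [h1, hfx, hfo v h3 h4, hGdef, gAB]
              simp only [deleteEdges_adj, Set.mem_singleton_iff, Sym2.eq_iff]
              constructor
              · rintro (⟨hx1, -⟩ | h)
                · exact absurd rfl hx1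
                · exact ⟨h, by tauto⟩
              · rintro ⟨h, -⟩; exact Or.inr h
        · by_cases h2 : u = y
          · by_cases h3 : v = x
            · rw [h2, h3, hfy, hfx, hGdef, gA y x]
              simp [Sym2.eq_iff]
            · by_cases h4 : v = y
              · rw [h2, h4]
                exact iff_of_false (fun h => h.ne rfl) (fun h => h.1.ne rfl)
              · rw [h2, hfy, hfo v h3 h4, hGdef, gAB]
                simp only [deleteEdges_adj, Set.mem_singleton_iff, Sym2.eq_iff]
                constructor
                · rintro (⟨-, hy1⟩ | h)
                  · exact absurd rfl hy1
                  · exact ⟨h, by tauto⟩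
                · rintro ⟨h, -⟩; exact Or.inr h
          · by_cases h3 : v = x
            · rw [h3, hfx, hfo u h1 h2, hGdef,
                ((glueExt H x y).deleteEdges {s(Sum.inl x, Sum.inl y)}).adj_comm, gAB]
              simp only [deleteEdges_adj, Set.mem_singleton_iff, Sym2.eq_iff]
              constructor
              · rintro (⟨hx1, -⟩ | h)
                · exact absurd rfl hx1
                · exact ⟨h.symm, by tauto⟩
              · rintro ⟨h, -⟩; exact Or.inr h.symm
            · by_cases h4 : v = y
              · rw [h4, hfy, hfo u h1 h2, hGdef,
                  ((glueExt H x y).deleteEdges {s(Sum.inl x, Sum.inl y)}).adj_comm, gAB]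
                simp only [deleteEdges_adj, Set.mem_singleton_iff, Sym2.eq_iff]
                constructor
                · rintro (⟨-, hy1⟩ | h)
                  · exact absurd rfl hy1
                  · exact ⟨h.symm, by tauto⟩
                · rintro ⟨h, -⟩; exact Or.inr h.symm
              · rw [hfo u h1 h2, hfo v h3 h4, hGdef, gBB]
                simp only [deleteEdges_adj, Set.mem_singleton_iff, Sym2.eq_iff]
                constructor
                · intro h; exact ⟨h, by tauto⟩
                · exact fun h => h.1
      obtain ⟨ψ⟩ := exists_iso_of_range G H (H.deleteEdges {s(x, y)}) s φ f hinj hs hadj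
      exact (no_iso_deleteEdge H he).false ψ
  · -- s inside first copy
    push_neg at hB
    have hs : s ⊆ Set.range (Sum.inl : V → V ⊕ {v : V // v ≠ x ∧ v ≠ y}) := by
      rintro (a | b) hp
      · exact ⟨a, rfl⟩
      · exact absurd hp (hB b)
    have hadj : ∀ u v, G.Adj (Sum.inl u) (Sum.inl v) ↔ (H.deleteEdges {s(x, y)}).Adj u v := by
      intro u v
      rw [hGdef, gA]
      simp only [deleteEdges_adj, Set.mem_singleton_iff, Sym2.eq_iff]
      tauto
    obtain ⟨ψ⟩ := exists_iso_of_range G H (H.deleteEdges {s(x, y)}) s φ Sum.inl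
      Sum.inl_injective hs hadj
    exact (no_iso_deleteEdge H he).false ψ
end

section
/- Every disconnected graph H without isolated vertices is edge-extendable: for every edge e ∈ E(H) there exists a graph U_H(e) such that (E.1) H is an induced subgraph of U_H(e), (E.2) U_H(e) − e has no induced subgraph isomorphic to H, and (E.3) for every edge f of U_H(e) other than e, U_H(e) − f contains an induced subgraph isomorphic to H. -/
open SimpleGraph

/-!
Take `U` on `V ⊕ V`: the left side is `H`; on the right, `inr x` and `inr y` are isolated and
the remaining vertices carry `H - {x, y}`; `inl a` and `inr b` are adjacent when `b ∉ {x, y}` and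
either `a ∉ {x, y}` or `a b` is an edge of `H`.

(E.3): the left copy of `H` uses no edge meeting the right side, and the copy that keeps `x, y` on
the left and moves every other vertex to the right uses no left edge except `inl x inl y`.

(E.2): let `θ` embed `H` into `U - inl x inl y`. As `H` has no isolated vertices, `θ` misses
`inr x` and `inr y`. If `θ` hits some `inl a` with `a ∉ {x, y}` and some `inr b`, then every
other vertex of the image except `inl x, inl y` is adjacent to `inl a` or `inr b`, while
`inl x, inl y` have neighbours in the image that are neither of them, so `H` would be connected.
Otherwise forgetting the side is injective on the image of `θ` and turns `θ` into an injective
homomorphism `H → H - xy`, which is impossible as `H - xy` has one edge fewer.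
-/

namespace SimpleGraph

variable {V W X : Type*}

lemma isHFree_iff_not_isIndContained {G : SimpleGraph W} {H : SimpleGraph V} :
    IsHFree G H ↔ ¬ H ⊴ G := by
  simp only [IsHFree, isIndContained_iff_exists_iso_induce, not_exists, not_nonempty_iff]
  exact forall_congr' fun s ↦
    ⟨fun h ↦ ⟨fun e ↦ h.false e.symm⟩, fun h ↦ ⟨fun e ↦ h.false e.symm⟩⟩

lemma not_adj_deleteEdges_of_mem_pair {G : SimpleGraph V} {a b c d : V}
    (hc : c = a ∨ c = b) (hd : d = a ∨ d = b) : ¬ (G.deleteEdges {s(a, b)}).Adj c d := by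
  rw [deleteEdges_adj, Set.mem_singleton_iff]
  rintro ⟨hcd, hne⟩
  rcases hc with rfl | rfl <;> rcases hd with rfl | rfl
  all_goals first | exact G.irrefl hcd | exact hne rfl | exact hne Sym2.eq_swap

lemma not_isContained_deleteEdges [Finite V] {G : SimpleGraph V} {e : Sym2 V}
    (he : e ∈ G.edgeSet) : ¬ G ⊑ G.deleteEdges {e} := by
  rintro ⟨f⟩
  have hle := Nat.card_le_card_of_injective _ f.mapEdgeSet.injective
  rw [Nat.card_coe_set_eq, Nat.card_coe_set_eq, edgeSet_deleteEdges] at hle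
  exact (Set.ncard_sdiff_singleton_lt_of_mem he).not_ge hle

lemma deleteEdges_inl_pair_adj_inr {G : SimpleGraph (V ⊕ W)} {x y : V} {p : V ⊕ W} {b : W} :
    (G.deleteEdges {s(.inl x, .inl y)}).Adj p (.inr b) ↔ G.Adj p (.inr b) := by
  simp

def Iso.deleteEdges {G : SimpleGraph V} {G' : SimpleGraph W} (ι : G ≃g G') (s : Set (Sym2 V)) :
    G.deleteEdges s ≃g G'.deleteEdges (Sym2.map ι '' s) where
  toEquiv := ι.toEquiv
  map_rel_iff' {a b} := by
    rw [deleteEdges_adj, deleteEdges_adj]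
    change G'.Adj (ι a) (ι b) ∧ s(ι a, ι b) ∉ Sym2.map ι '' s ↔ _
    rw [ι.map_adj_iff, ← Sym2.map_mk, (Sym2.map.injective ι.injective).mem_set_image]

lemma Embedding.isIndContained_deleteEdges {G : SimpleGraph V} {H : SimpleGraph W}
    (θ : H ↪g G) {s : Set (Sym2 V)} (hs : ∀ a b, H.Adj a b → s(θ a, θ b) ∉ s) :
    H ⊴ G.deleteEdges s :=
  ⟨{ toEmbedding := θ.toEmbedding
     map_rel_iff' {a b} := by
       rw [deleteEdges_adj]
       change G.Adj (θ a) (θ b) ∧ s(θ a, θ b) ∉ s ↔ _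
       rw [θ.map_adj_iff]
       exact ⟨And.left, fun h ↦ ⟨h, hs a b h⟩⟩ }⟩

/-- Conditions (E.2) and (E.3) for the copy `φ` of `H` in `U` and its edge `φ x φ y`. -/
def ExtendsEdge {U : SimpleGraph W} {H : SimpleGraph V} (φ : H ↪g U) (x y : V) : Prop :=
  ¬ H ⊴ U.deleteEdges {s(φ x, φ y)} ∧
    ∀ f ∈ U.edgeSet, f ≠ s(φ x, φ y) → H ⊴ U.deleteEdges {f}

lemma ExtendsEdge.comp_iso {U : SimpleGraph W} {U' : SimpleGraph X} {H : SimpleGraph V}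
    {φ : H ↪g U} {x y : V} (h : ExtendsEdge φ x y) (ι : U ≃g U') :
    ExtendsEdge (ι.toEmbedding.comp φ) x y := by
  have hmap : ∀ f : Sym2 W, U'.deleteEdges {Sym2.map ι f} ≃g U.deleteEdges {f} := fun f ↦
    (by simpa using ι.deleteEdges {f} : U.deleteEdges {f} ≃g _).symm
  refine ⟨fun h' ↦ h.1 (h'.trans (hmap s(φ x, φ y)).isIndContained), ?_⟩
  intro f' hf' hne
  obtain ⟨f, rfl⟩ : ∃ f, Sym2.map ι f = f' :=
    ⟨Sym2.map ι.symm f', by simp [Sym2.map_map]⟩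
  have hfe : f ≠ s(φ x, φ y) := fun hfe ↦ hne (by simp [hfe])
  exact (h.2 f (ι.map_mem_edgeSet_iff.1 hf') hfe).trans (hmap f).symm.isIndContained

end SimpleGraph

section Extender

open Sum

variable {V : Type*} (H : SimpleGraph V) (x y : V)

def extender : SimpleGraph (V ⊕ V) where
  Adj
    | inl a, inl b => H.Adj a b
    | inl a, inr b => b ∉ ({x, y} : Set V) ∧ (a ∉ ({x, y} : Set V) ∨ H.Adj a b)
    | inr a, inl b => a ∉ ({x, y} : Set V) ∧ (b ∉ ({x, y} : Set V) ∨ H.Adj b a)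
    | inr a, inr b => H.Adj a b ∧ a ∉ ({x, y} : Set V) ∧ b ∉ ({x, y} : Set V)
  symm := ⟨by
    rintro (a | a) (b | b) h
    exacts [h.symm, h, h, ⟨h.1.symm, h.2.2, h.2.1⟩]⟩
  loopless := ⟨by
    rintro (a | a) h
    exacts [H.irrefl h, H.irrefl h.1]⟩

variable {H x y}

@[simp] lemma extender_adj_inl_inl {a b : V} : (extender H x y).Adj (inl a) (inl b) ↔ H.Adj a b :=
  Iff.rfl

@[simp] lemma extender_adj_inl_inr {a b : V} :
    (extender H x y).Adj (inl a) (inr b) ↔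
      b ∉ ({x, y} : Set V) ∧ (a ∉ ({x, y} : Set V) ∨ H.Adj a b) :=
  Iff.rfl

@[simp] lemma extender_adj_inr_inl {a b : V} :
    (extender H x y).Adj (inr a) (inl b) ↔
      a ∉ ({x, y} : Set V) ∧ (b ∉ ({x, y} : Set V) ∨ H.Adj b a) :=
  Iff.rfl

@[simp] lemma extender_adj_inr_inr {a b : V} :
    (extender H x y).Adj (inr a) (inr b) ↔
      H.Adj a b ∧ a ∉ ({x, y} : Set V) ∧ b ∉ ({x, y} : Set V) :=
  Iff.rfl

lemma extender_not_adj_inr {a : V} (ha : a ∈ ({x, y} : Set V)) (p : V ⊕ V) :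
    ¬ (extender H x y).Adj (inr a) p := by
  rcases p with b | b <;> simp [ha]

variable (H x y)

def extender.inlEmbedding : H ↪g extender H x y where
  toFun := inl
  inj' := inl_injective
  map_rel_iff' := Iff.rfl

open Classical in
noncomputable def extender.split (v : V) : V ⊕ V :=
  if v ∈ ({x, y} : Set V) then inl v else inr v

noncomputable def extender.splitEmbedding : H ↪g extender H x y where
  toFun := extender.split x y
  inj' := Function.LeftInverse.injective (g := Sum.elim id id) fun v ↦ by
    unfold extender.split; split_ifs <;> rfl
  map_rel_iff' {a b} := by
    change (extender H x y).Adj (extender.split x y a) (extender.split x y b) ↔ _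
    unfold extender.split
    split_ifs with ha hb hb <;> simp [ha, hb, H.adj_comm]

variable {H x y}

lemma extender.split_of_mem {v : V} (hv : v ∈ ({x, y} : Set V)) : extender.split x y v = inl v :=
  if_pos hv

lemma extender.split_of_notMem {v : V} (hv : v ∉ ({x, y} : Set V)) :
    extender.split x y v = inr v :=
  if_neg hv

lemma extender_isIndContained_deleteEdges {f : Sym2 (V ⊕ V)} (hne : f ≠ s(inl x, inl y)) :
    H ⊴ (extender H x y).deleteEdges {f} := by
  induction f using Sym2.ind with | _ p q => ?_
  rcases p with a | a <;> rcases q with b | b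
  · refine (extender.splitEmbedding H x y).isIndContained_deleteEdges fun u w huw hf ↦ hne ?_
    change s(extender.split x y u, extender.split x y w) = s(inl a, inl b) at hf
    by_cases hu : u ∈ ({x, y} : Set V); swap
    · simp [extender.split_of_notMem hu] at hf
    by_cases hw : w ∈ ({x, y} : Set V); swap
    · simp [extender.split_of_notMem hw] at hf
    rw [← hf, extender.split_of_mem hu, extender.split_of_mem hw]
    rcases hu with rfl | rfl <;> rcases hw with rfl | rfl
    all_goals first | exact (H.irrefl huw).elim | rfl | exact Sym2.eq_swap
  all_goals
    refine (extender.inlEmbedding H x y).isIndContained_deleteEdges fun u w _ ↦ ?_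
    simp [extender.inlEmbedding]

lemma extender.notMem_of_embedding_eq_inr (hiso : ∀ v, ∃ w, H.Adj v w)
    (θ : H ↪g (extender H x y).deleteEdges {s(inl x, inl y)}) {v : V} {a : V}
    (h : θ v = inr a) : a ∉ ({x, y} : Set V) := by
  intro ha
  obtain ⟨w, hw⟩ := hiso v
  exact extender_not_adj_inr ha (θ w) (h ▸ deleteEdges_le _ (θ.map_adj_iff.2 hw))

lemma extender.preconnected_of_mixed_embedding (hiso : ∀ v, ∃ w, H.Adj v w)
    (θ : H ↪g (extender H x y).deleteEdges {s(inl x, inl y)}) {u v : V} {a b : V}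
    (hu : θ u = inl a) (ha : a ∉ ({x, y} : Set V)) (hv : θ v = inr b) : H.Preconnected := by
  have hb := extender.notMem_of_embedding_eq_inr hiso θ hv
  have huv : H.Adj u v := θ.map_adj_iff.1 <| by
    rw [hu, hv, deleteEdges_inl_pair_adj_inr]; exact ⟨hb, .inl ha⟩
  have hcore : ∀ w, θ w ≠ inl x → θ w ≠ inl y → H.Reachable w u := by
    intro w hwx hwy
    rcases hw : θ w with c | c
    · have hc : c ∉ ({x, y} : Set V) := by rintro (rfl | rfl) <;> simp_all
      have hwv : H.Adj w v := θ.map_adj_iff.1 <| by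
        rw [hw, hv, deleteEdges_inl_pair_adj_inr]; exact ⟨hb, .inl hc⟩
      exact hwv.reachable.trans huv.symm.reachable
    · have hc := extender.notMem_of_embedding_eq_inr hiso θ hw
      have huw : H.Adj u w := θ.map_adj_iff.1 <| by
        rw [hu, hw, deleteEdges_inl_pair_adj_inr]; exact ⟨hc, .inl ha⟩
      exact huw.symm.reachable
  have hall : ∀ w, H.Reachable w u := by
    intro w
    by_cases hw : θ w = inl x ∨ θ w = inl y
    · obtain ⟨w', hww'⟩ := hiso w
      have hθ := θ.map_adj_iff.2 hww'
      refine hww'.reachable.trans (hcore w' (fun h ↦ ?_) fun h ↦ ?_) <;>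
        exact not_adj_deleteEdges_of_mem_pair hw (by simp [h]) hθ
    · rw [not_or] at hw
      exact hcore w hw.1 hw.2
  exact fun w w' ↦ (hall w).trans (hall w').symm

lemma extender.deleteEdges_adj_elim {p q : V ⊕ V}
    (h : ((extender H x y).deleteEdges {s(inl x, inl y)}).Adj p q)
    (hp : ∀ a b, p = inl a → q = inr b → a ∈ ({x, y} : Set V))
    (hq : ∀ a b, q = inl a → p = inr b → a ∈ ({x, y} : Set V)) :
    (H.deleteEdges {s(x, y)}).Adj (p.elim id id) (q.elim id id) := by
  rcases p with a | a <;> rcases q with b | b <;> simp_all [H.adj_comm b]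

lemma extender.isContained_deleteEdges_of_unmixed_embedding (hiso : ∀ v, ∃ w, H.Adj v w)
    (θ : H ↪g (extender H x y).deleteEdges {s(inl x, inl y)})
    (hsplit : ∀ u v a b, θ u = inl a → θ v = inr b → a ∈ ({x, y} : Set V)) :
    H ⊑ H.deleteEdges {s(x, y)} := by
  refine ⟨⟨fun v ↦ (θ v).elim id id, fun {u w} huw ↦ ?_⟩, fun u w huw ↦ ?_⟩
  · exact extender.deleteEdges_adj_elim (θ.map_adj_iff.2 huw)
      (fun a b hu hw ↦ hsplit u w a b hu hw) fun a b hw hu ↦ hsplit w u a b hw hu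
  · refine θ.injective ?_
    have hinr {v a} : θ v = inr a → a ∉ ({x, y} : Set V) :=
      extender.notMem_of_embedding_eq_inr hiso θ
    rcases hu : θ u with a | a <;> rcases hw : θ w with b | b <;>
      simp only [hu, hw, RelHom.coeFn_mk, elim_inl, elim_inr, id_eq] at huw <;> subst huw
    exacts [rfl, (hinr hw (hsplit u w a a hu hw)).elim, (hinr hu (hsplit w u a a hw hu)).elim, rfl]

theorem extender_not_isIndContained_deleteEdges [Finite V] (hH : ¬ H.Connected)
    (hiso : ∀ v, ∃ w, H.Adj v w) (hxy : H.Adj x y) :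
    ¬ H ⊴ (extender H x y).deleteEdges {s(inl x, inl y)} := by
  rintro ⟨θ⟩
  by_cases hsplit : ∀ u v a b, θ u = inl a → θ v = inr b → a ∈ ({x, y} : Set V)
  · exact not_isContained_deleteEdges hxy
      (extender.isContained_deleteEdges_of_unmixed_embedding hiso θ hsplit)
  · simp only [not_forall] at hsplit
    obtain ⟨u, v, a, b, hu, hv, ha⟩ := hsplit
    have : Nonempty V := ⟨x⟩
    exact hH ⟨extender.preconnected_of_mixed_embedding hiso θ hu ha hv⟩

theorem extender_extendsEdge [Finite V] (hH : ¬ H.Connected) (hiso : ∀ v, ∃ w, H.Adj v w)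
    (hxy : H.Adj x y) : ExtendsEdge (extender.inlEmbedding H x y) x y :=
  ⟨extender_not_isIndContained_deleteEdges hH hiso hxy,
    fun _ _ hne ↦ extender_isIndContained_deleteEdges hne⟩

end Extender

/-- Every disconnected graph `H` without isolated vertices is edge-extendable:
for every edge `xy` of `H` there is a graph `U` together with an induced copy `φ` of `H`
in `U` (condition (E.1)) such that deleting the edge `φ(x)φ(y)` from `U` leaves an
`H`-free graph (E.2), while deleting any other edge of `U` leaves an induced copy
of `H` (E.3). -/
theorem stmt6 {V : Type*} [Fintype V] (H : SimpleGraph V) (hH : ¬ H.Connected)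
    (hiso : ∀ v : V, ∃ w : V, H.Adj v w) :
    ∀ x y : V, H.Adj x y →
      ∃ (n : ℕ) (U : SimpleGraph (Fin n)) (φ : H ↪g U),
        IsHFree (U.deleteEdges {s(φ x, φ y)}) H ∧
        ∀ f ∈ U.edgeSet, f ≠ s(φ x, φ y) → ¬ IsHFree (U.deleteEdges {f}) H := by
  intro x y hxy
  obtain ⟨hfree, hcopy⟩ :=
    (extender_extendsEdge hH hiso hxy).comp_iso ((extender H x y).overFinIso rfl)
  exact ⟨_, _, _, isHFree_iff_not_isIndContained.2 hfree,
    fun f hf hne hfree ↦ isHFree_iff_not_isIndContained.1 hfree (hcopy f hf hne)⟩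
end

section
/- Let H be a graph with exactly k > 0 isolated vertices and let H' be H with all isolated vertices removed. Then for any graph G': G' is H'-free if and only if the disjoint union \overline{K_k} ∪ G' is H-free. -/
open SimpleGraph

/-- The disjoint union of two graphs on disjoint vertex sets. -/
def graphUnion {V₁ V₂ : Type*} (G₁ : SimpleGraph V₁) (G₂ : SimpleGraph V₂) :
    SimpleGraph (V₁ ⊕ V₂) :=
  SimpleGraph.fromRel (fun x y =>
    match x, y with
    | Sum.inl a, Sum.inl b => G₁.Adj a b
    | Sum.inr a, Sum.inr b => G₂.Adj a b
    | _, _ => False)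

lemma gu_adj_inr {V₁ V₂ : Type*} (G₁ : SimpleGraph V₁) (G₂ : SimpleGraph V₂) (a b : V₂) :
    (graphUnion G₁ G₂).Adj (Sum.inr a) (Sum.inr b) ↔ G₂.Adj a b := by
  constructor
  · rintro ⟨hne, h | h⟩
    · exact h
    · exact h.symm
  · intro h
    exact ⟨by simpa using h.ne, Or.inl h⟩

lemma gu_not_adj_inl {V₁ V₂ : Type*} (G₂ : SimpleGraph V₂) (a : V₁)
    (x : V₁ ⊕ V₂) : ¬ (graphUnion (⊥ : SimpleGraph V₁) G₂).Adj (Sum.inl a) x := by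
  rintro ⟨hne, h | h⟩ <;> rcases x with b | b <;> simp_all [graphUnion]

def gAux {V V' : Type*} {k : ℕ} (H : SimpleGraph V) (G' : SimpleGraph V') (s : Set V')
    (e₀ : Fin k ≃ ↥{v : V | ∀ w, ¬ H.Adj v w})
    (e : G'.induce s ≃g H.induce {v : V | ∃ w, H.Adj v w}) :
    ↥{x : Fin k ⊕ V' | ∀ v', x = Sum.inr v' → v' ∈ s} → V
  | ⟨Sum.inl a, _⟩ => (e₀ a : V)
  | ⟨Sum.inr v', h⟩ => (e ⟨v', h v' rfl⟩ : V)

/-- `H` has exactly `k > 0` isolated vertices; `H'` is `H` with the isolated vertices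
removed. Then `G'` is `H'`-free iff the disjoint union of the edgeless graph on `k`
vertices with `G'` is `H`-free. -/
theorem stmt14 {V : Type*} [Fintype V] (H : SimpleGraph V) (k : ℕ) (hk : 0 < k)
    (hcard : {v : V | ∀ w, ¬ H.Adj v w}.ncard = k)
    {V' : Type*} (G' : SimpleGraph V') :
    IsHFree G' (H.induce {v : V | ∃ w, H.Adj v w}) ↔
      IsHFree (graphUnion (⊥ : SimpleGraph (Fin k)) G') H := by
  classical
  set Iso : Set V := {v : V | ∀ w, ¬ H.Adj v w} with hIso
  set N : Set V := {v : V | ∃ w, H.Adj v w} with hN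
  constructor
  · -- forward: G' is H'-free → union is H-free
    intro hfree S
    refine ⟨fun e => ?_⟩
    -- isolated vertices of the union map to isolated vertices of H
    have hisol : ∀ (x : S) (a : Fin k), (x : Fin k ⊕ V') = Sum.inl a →
        ∀ w, ¬ H.Adj (e x) w := by
      intro x a hx w hw
      rw [show w = e (e.symm w) by simp] at hw
      rw [e.map_rel_iff] at hw
      simp only [comap_adj, Function.Embedding.coe_subtype] at hw
      rw [hx] at hw
      exact gu_not_adj_inl G' a _ hw
    set t : Set V' := {v' | ∃ h : Sum.inr v' ∈ S, (e ⟨Sum.inr v', h⟩ : V) ∈ N} with ht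
    set f : ↥t → ↥N := fun x => ⟨e ⟨Sum.inr (x : V'), x.2.choose⟩, x.2.choose_spec⟩ with hf
    have finj : Function.Injective f := by
      intro x y hxy
      have h1 : (e ⟨Sum.inr (x : V'), x.2.choose⟩ : V) = e ⟨Sum.inr (y : V'), y.2.choose⟩ :=
        congrArg Subtype.val hxy
      have h2 := e.injective h1
      have h3 : (Sum.inr (x : V') : Fin k ⊕ V') = Sum.inr (y : V') :=
        congrArg Subtype.val h2
      exact Subtype.ext (Sum.inr.inj h3)
    have fsurj : Function.Surjective f := by
      intro w
      obtain ⟨u, hu⟩ := w.2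
      have hadj : H.Adj (e (e.symm w.1)) (e (e.symm u)) := by simp; exact hu
      rw [e.map_rel_iff] at hadj
      simp only [comap_adj, Function.Embedding.coe_subtype] at hadj
      rcases hx : ((e.symm w.1) : Fin k ⊕ V') with a | v'
      · rw [hx] at hadj
        exact absurd hadj (gu_not_adj_inl G' a _)
      · have hmem' : Sum.inr v' ∈ S := hx ▸ (e.symm w.1).2
        have hxeq : (⟨Sum.inr v', hmem'⟩ : S) = e.symm w.1 := Subtype.ext hx.symm
        have hvN : (e ⟨Sum.inr v', hmem'⟩ : V) ∈ N := by
          rw [hxeq]; simpa using w.2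
        refine ⟨⟨v', ⟨hmem', hvN⟩⟩, ?_⟩
        apply Subtype.ext
        show (e ⟨Sum.inr v', _⟩ : V) = w.1
        rw [show (⟨Sum.inr v', _⟩ : S) = e.symm w.1 from Subtype.ext hx.symm]
        simp
    have hmri : ∀ x y : ↥t, (H.induce N).Adj (f x) (f y) ↔ (G'.induce t).Adj x y := by
      intro x y
      simp only [comap_adj, Function.Embedding.coe_subtype, hf]
      rw [e.map_rel_iff]
      simp only [comap_adj, Function.Embedding.coe_subtype]
      exact gu_adj_inr _ _ _ _
    exact (hfree t).false ⟨Equiv.ofBijective f ⟨finj, fsurj⟩, hmri _ _⟩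
  · -- backward: union is H-free → G' is H'-free
    intro hfree s
    refine ⟨fun e => ?_⟩
    haveI : Fintype ↥Iso := Fintype.ofFinite _
    have hcard' : Fintype.card ↥Iso = k := by
      rw [← Nat.card_eq_fintype_card, Nat.card_coe_set_eq, hcard]
    let e₀ : Fin k ≃ ↥Iso := (Fintype.equivFinOfCardEq hcard').symm
    set S : Set (Fin k ⊕ V') := {x | ∀ v', x = Sum.inr v' → v' ∈ s} with hS
    set g : ↥S → V := gAux H G' s e₀ e with hg
    have hNc : ∀ v : V, v ∈ N ↔ v ∉ Iso := by
      intro v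
      simp only [hN, hIso, Set.mem_setOf_eq, not_forall, not_not]
    have ginj : Function.Injective g := by
      rintro ⟨a | v₁, hx⟩ ⟨b | v₂, hy⟩ hxy
      · exact Subtype.ext (congrArg Sum.inl (e₀.injective (Subtype.ext hxy)))
      · exfalso
        rw [hg] at hxy
        simp only [gAux] at hxy
        have h1 : (e₀ a : V) ∈ Iso := (e₀ a).2
        have h2 : (e ⟨v₂, hy v₂ rfl⟩ : V) ∈ N := (e ⟨v₂, hy v₂ rfl⟩).2
        rw [hxy] at h1
        exact (hNc _).mp h2 h1
      · exfalso
        rw [hg] at hxy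
        simp only [gAux] at hxy
        have h1 : (e₀ b : V) ∈ Iso := (e₀ b).2
        have h2 : (e ⟨v₁, hx v₁ rfl⟩ : V) ∈ N := (e ⟨v₁, hx v₁ rfl⟩).2
        rw [← hxy] at h1
        exact (hNc _).mp h2 h1
      · have h2 := e.injective (Subtype.ext hxy)
        exact Subtype.ext (congrArg Sum.inr (congrArg Subtype.val h2))
    have gsurj : Function.Surjective g := by
      intro w
      by_cases hw : w ∈ Iso
      · exact ⟨⟨Sum.inl (e₀.symm ⟨w, hw⟩), by intro v' h; exact absurd h (by simp)⟩,
          by show (e₀ (e₀.symm ⟨w, hw⟩) : V) = w; rw [Equiv.apply_symm_apply]⟩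
      · have hwN : w ∈ N := (hNc w).mpr hw
        refine ⟨⟨Sum.inr (e.symm ⟨w, hwN⟩ : V'), ?_⟩, ?_⟩
        · intro v' h
          have := Sum.inr.inj h
          rw [← this]
          exact (e.symm ⟨w, hwN⟩).2
        · show (e ⟨(e.symm ⟨w, hwN⟩ : V'), _⟩ : V) = w
          rw [show (⟨(e.symm ⟨w, hwN⟩ : V'), _⟩ : s) = e.symm ⟨w, hwN⟩ from rfl]
          simp
    have hmri : ∀ x y : ↥S, H.Adj (g x) (g y) ↔
        (((graphUnion (⊥ : SimpleGraph (Fin k)) G')).induce S).Adj x y := by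
      rintro ⟨a | v₁, hx⟩ ⟨b | v₂, hy⟩
      · constructor
        · intro h; exact absurd h ((e₀ a).2 _)
        · intro h
          simp only [comap_adj, Function.Embedding.coe_subtype] at h
          exact absurd h (gu_not_adj_inl G' a _)
      · constructor
        · intro h; exact absurd h ((e₀ a).2 _)
        · intro h
          simp only [comap_adj, Function.Embedding.coe_subtype] at h
          exact absurd h (gu_not_adj_inl G' a _)
      · constructor
        · intro h; exact absurd h.symm ((e₀ b).2 _)
        · intro h
          simp only [comap_adj, Function.Embedding.coe_subtype] at h
          exact absurd h.symm (gu_not_adj_inl G' b _)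
      · show H.Adj (e ⟨v₁, hx v₁ rfl⟩ : V) (e ⟨v₂, hy v₂ rfl⟩ : V) ↔ _
        have h1 : H.Adj (e ⟨v₁, hx v₁ rfl⟩ : V) (e ⟨v₂, hy v₂ rfl⟩ : V) ↔
            (H.induce N).Adj (e ⟨v₁, hx v₁ rfl⟩) (e ⟨v₂, hy v₂ rfl⟩) := by
          simp only [comap_adj, Function.Embedding.coe_subtype]
        rw [h1, e.map_rel_iff]
        simp only [comap_adj, Function.Embedding.coe_subtype]
        exact (gu_adj_inr _ _ _ _).symm
    exact (hfree S).false ⟨Equiv.ofBijective g ⟨ginj, gsurj⟩, hmri _ _⟩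
end

section
/- Let H1, …, Hm be pairwise disjoint copies of a fixed disconnected graph H, and for each i let U_i be an e_i-extension of H_i for some edge e_i of H_i. Then in the iterated join G = U_1 ∇ … ∇ U_m, deleting the edge set X = {e_1, …, e_m} yields an H-free graph, and every set of edges whose deletion makes G H-free has size at least m. -/
open SimpleGraph

/-- The iterated join of a family of graphs: all edges inside each graph,
plus all edges between any two distinct graphs of the family. -/
def sigmaJoin {ι : Type*} {W : ι → Type*} (U : ∀ i, SimpleGraph (W i)) :
    SimpleGraph (Σ i, W i) :=
  SimpleGraph.fromRel (fun p q =>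
    p.1 ≠ q.1 ∨ ∃ h : q.1 = p.1, (U p.1).Adj p.2 (h ▸ q.2))

section Aux

variable {ι : Type*} {W : ι → Type*} (U : ∀ i, SimpleGraph (W i))

lemma sigmaJoin_adj_ne {i j : ι} (hij : i ≠ j) (a : W i) (b : W j) :
    (sigmaJoin U).Adj ⟨i, a⟩ ⟨j, b⟩ := by
  rw [sigmaJoin, SimpleGraph.fromRel_adj]
  exact ⟨fun hEq => hij (congrArg Sigma.fst hEq), Or.inl (Or.inl hij)⟩

lemma sigmaJoin_adj_same {i : ι} (a b : W i) :
    (sigmaJoin U).Adj ⟨i, a⟩ ⟨i, b⟩ ↔ (U i).Adj a b := by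
  rw [sigmaJoin, SimpleGraph.fromRel_adj]
  simp only [ne_eq, not_true_eq_false, false_or, Sigma.mk.inj_iff, heq_eq_eq, true_and,
    exists_true_left, exists_const, not_and]
  constructor
  · rintro ⟨h1, h2 | h2⟩
    · exact h2
    · exact h2.symm
  · intro h
    exact ⟨fun hab => (h.ne (by simpa using hab)).elim, Or.inl h⟩

/-- Two `Sym2.map` images living in different parts of a sigma type can only
agree if the parts agree. -/
lemma sigma_parts_eq_of_map_eq {V V' : Type*} {i j : ι} (f : V → W i) (f' : V' → W j)
    (e : Sym2 V) (e' : Sym2 V')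
    (h : Sym2.map (fun v => (⟨i, f v⟩ : Σ k, W k)) e
        = Sym2.map (fun v => (⟨j, f' v⟩ : Σ k, W k)) e') : i = j := by
  induction e using Sym2.ind with
  | _ a b =>
    induction e' using Sym2.ind with
    | _ c d =>
      rw [Sym2.map_pair_eq, Sym2.map_pair_eq, Sym2.eq_iff] at h
      rcases h with ⟨h1, _⟩ | ⟨h1, _⟩ <;> exact congrArg Sigma.fst h1

end Aux

/-- `U i` is an `e i`-extension of the `i`-th copy of the disconnected graph `H`
(the copy being given by the graph embedding `φ i`, with `e i` the edge joining
`φ i (x i)` and `φ i (y i)`).  In the iterated join `G` of the `U i`, deleting the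
edge set `X = {e 1, …, e m}` yields an `H`-free graph, and every edge set whose
deletion makes `G` `H`-free has size at least `m`. -/
theorem stmt15 {V : Type*} [Fintype V] [Nonempty V] (H : SimpleGraph V)
    (hH : ¬ H.Connected)
    (m : ℕ) (W : Fin m → Type*) (U : ∀ i, SimpleGraph (W i))
    (φ : ∀ i, H ↪g U i) (x y : Fin m → V) (he : ∀ i, H.Adj (x i) (y i))
    (hE2 : ∀ i, IsHFree ((U i).deleteEdges {s(φ i (x i), φ i (y i))}) H)
    (hE3 : ∀ i, ∀ f ∈ (U i).edgeSet, f ≠ s(φ i (x i), φ i (y i)) →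
      ¬ IsHFree ((U i).deleteEdges {f}) H) :
    IsHFree ((sigmaJoin U).deleteEdges
        {e | ∃ i : Fin m, e = s(⟨i, φ i (x i)⟩, ⟨i, φ i (y i)⟩)}) H ∧
      ∀ Y : Finset (Sym2 (Σ i, W i)),
        IsHFree ((sigmaJoin U).deleteEdges ↑Y) H → m ≤ Y.card := by
  classical
  set X : Set (Sym2 (Σ i, W i)) :=
    {e | ∃ i : Fin m, e = s(⟨i, φ i (x i)⟩, ⟨i, φ i (y i)⟩)} with hX
  set G' : SimpleGraph (Σ i, W i) := (sigmaJoin U).deleteEdges X with hG'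
  -- deleted edges stay within one part
  have hXsame : ∀ (p q : Σ i, W i), s(p, q) ∈ X → p.1 = q.1 := by
    rintro p q ⟨i, hi⟩
    rw [Sym2.eq_iff] at hi
    rcases hi with ⟨h1, h2⟩ | ⟨h1, h2⟩ <;> subst h1 <;> subst h2 <;> rfl
  -- cross edges survive
  have hcross : ∀ (p q : Σ i, W i), p.1 ≠ q.1 → G'.Adj p q := by
    intro p q hpq
    rw [hG', SimpleGraph.deleteEdges_adj]
    constructor
    · obtain ⟨i, a⟩ := p; obtain ⟨j, b⟩ := q
      exact sigmaJoin_adj_ne U hpq a b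
    · intro hmem
      exact hpq (hXsame _ _ hmem)
  constructor
  · -- Part 1: G' is H-free
    intro s
    constructor
    intro e
    -- s is nonempty
    have hsne : s.Nonempty := by
      obtain ⟨a, ha⟩ := e.symm (Classical.arbitrary V)
      exact ⟨a, ha⟩
    obtain ⟨a0, ha0⟩ := hsne
    by_cases hone : ∀ a ∈ s, a.1 = a0.1
    · -- all vertices in one part i0
      set i0 := a0.1 with hi0
      set t : Set (W i0) := (fun w => (⟨i0, w⟩ : Σ j, W j)) ⁻¹' s with ht
      have hinj : Function.Injective (fun w => (⟨i0, w⟩ : Σ j, W j)) :=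
        sigma_mk_injective
      set G2 : SimpleGraph (W i0) := (U i0).deleteEdges {s(φ i0 (x i0), φ i0 (y i0))} with hG2
      have hadj : ∀ (w w' : W i0), G'.Adj ⟨i0, w⟩ ⟨i0, w'⟩ ↔ G2.Adj w w' := by
        intro w w'
        rw [hG', hG2, SimpleGraph.deleteEdges_adj, SimpleGraph.deleteEdges_adj,
          sigmaJoin_adj_same]
        constructor
        · rintro ⟨h1, h2⟩
          refine ⟨h1, ?_⟩
          intro hmem
          apply h2
          rw [Set.mem_singleton_iff] at hmem
          refine ⟨i0, ?_⟩
          have := congrArg (Sym2.map (Sigma.mk i0)) hmem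
          simpa [Sym2.map_pair_eq] using this
        · rintro ⟨h1, h2⟩
          refine ⟨h1, ?_⟩
          rintro ⟨i, hi⟩
          have hfst : i0 = i := by
            rcases Sym2.eq_iff.mp hi with ⟨h3, _⟩ | ⟨h3, _⟩ <;>
              exact congrArg Sigma.fst h3
          subst hfst
          apply h2
          rw [Set.mem_singleton_iff]
          have : Sym2.map (Sigma.mk i0) s(w, w') =
              Sym2.map (Sigma.mk i0) s(φ i0 (x i0), φ i0 (y i0)) := by
            simpa [Sym2.map_pair_eq] using hi
          exact Sym2.map.injective hinj this
      have hbij : Function.Bijective (fun w : t => (⟨⟨i0, w.1⟩, w.2⟩ : s)) := by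
        constructor
        · intro w w' hww'
          have := congrArg Subtype.val hww'
          exact Subtype.ext (sigma_mk_injective this)
        · rintro ⟨⟨j, w⟩, ha⟩
          have : j = i0 := hone _ ha
          subst this
          exact ⟨⟨w, ha⟩, rfl⟩
      let eqv : t ≃ s := Equiv.ofBijective _ hbij
      have iso : (G2.induce t) ≃g (G'.induce s) := by
        refine ⟨eqv, ?_⟩
        intro w w'
        show G'.Adj _ _ ↔ G2.Adj _ _
        exact hadj w.1 w'.1
      exact (hE2 i0 t).false (iso.trans e)
    · -- s meets two parts: induced graph is connected, contradiction
      push_neg at hone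
      obtain ⟨b0, hb0, hb0ne⟩ := hone
      have hpre : (G'.induce s).Preconnected := by
        intro u v
        by_cases huv : u.1.1 = v.1.1
        · by_cases huv' : u = v
          · exact huv' ▸ SimpleGraph.Reachable.refl u
          · by_cases hu : u.1.1 = a0.1
            · have hb : u.1.1 ≠ b0.1 := by
                rw [hu]; exact fun h => hb0ne h.symm
              have h1 : (G'.induce s).Adj u ⟨b0, hb0⟩ := hcross _ _ hb
              have h2' : b0.1 ≠ (v : Σ i, W i).1 := by
                rw [← huv, hu]; exact hb0ne
              have h2 : (G'.induce s).Adj ⟨b0, hb0⟩ v := hcross _ _ h2'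
              exact h1.reachable.trans h2.reachable
            · have h1 : (G'.induce s).Adj u ⟨a0, ha0⟩ := hcross _ _ hu
              have h2' : a0.1 ≠ (v : Σ i, W i).1 := by
                rw [← huv]; exact fun h => hu h.symm
              have h2 : (G'.induce s).Adj ⟨a0, ha0⟩ v := hcross _ _ h2'
              exact h1.reachable.trans h2.reachable
        · exact (SimpleGraph.Adj.reachable (hcross _ _ huv))
      apply hH
      constructor
      intro u v
      have := (hpre (e.symm u) (e.symm v)).map e.toHom
      simpa using this
  · -- Part 2: lower bound
    intro Y hY
    set E : Fin m → Set (Sym2 (Σ i, W i)) :=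
      fun i => Sym2.map (fun v => (⟨i, φ i v⟩ : Σ j, W j)) '' H.edgeSet with hEdef
    -- each copy must lose an edge
    have hhit : ∀ i : Fin m, ∃ f ∈ Y, f ∈ E i := by
      intro i
      by_contra hno
      push_neg at hno
      set s : Set (Σ j, W j) := Set.range (fun v => (⟨i, φ i v⟩ : Σ j, W j)) with hs
      set GY : SimpleGraph (Σ j, W j) := (sigmaJoin U).deleteEdges ↑Y with hGY
      have hinj2 : Function.Injective (fun v => (⟨i, φ i v⟩ : Σ j, W j)) := by
        intro u v h
        exact (φ i).injective (sigma_mk_injective h)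
      let eqv : V ≃ s := Equiv.ofInjective _ hinj2
      have iso : H ≃g (GY.induce s) := by
        refine ⟨eqv, ?_⟩
        intro u v
        show GY.Adj ⟨i, φ i u⟩ ⟨i, φ i v⟩ ↔ H.Adj u v
        rw [hGY, SimpleGraph.deleteEdges_adj, sigmaJoin_adj_same, (φ i).map_adj_iff]
        constructor
        · rintro ⟨h1, _⟩; exact h1
        · intro h
          refine ⟨h, ?_⟩
          intro hmem
          refine hno _ hmem ⟨s(u, v), h, ?_⟩
          rw [Sym2.map_pair_eq]
      exact (hY s).false iso.symm
    choose g hgY hgE using hhit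
    have hginj : Function.Injective g := by
      intro i j hij
      obtain ⟨ei, _, hei⟩ := hgE i
      obtain ⟨ej, _, hej⟩ := hgE j
      exact sigma_parts_eq_of_map_eq _ _ ei ej (hei.trans (hij.trans hej.symm))
    calc m = (Finset.univ : Finset (Fin m)).card := (Finset.card_fin m).symm
      _ ≤ Y.card := Finset.card_le_card_of_injOn g (fun i _ => hgY i)
          (Function.Injective.injOn hginj)
end

section
/- Let U be the graph obtained from a disconnected graph H without isolated vertices and an edge e = xy by gluing a disjoint copy H' of H at x and y (identifying x=x', y=y') and joining all other vertices of H with all other vertices of H'. Then for every edge f of U with f ≠ e, the graph U − f contains an induced subgraph isomorphic to H. -/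
open SimpleGraph

lemma glue_inl_inl {V : Type*} (H : SimpleGraph V) (x y a b : V) :
    (glueExt H x y).Adj (Sum.inl a) (Sum.inl b) ↔ H.Adj a b := by
  simp only [glueExt, fromRel_adj]
  constructor
  · rintro ⟨hne, h | h⟩
    · exact h
    · exact h.symm
  · intro h
    exact ⟨by simpa using h.ne, Or.inl h⟩

lemma glue_inl_inr {V : Type*} (H : SimpleGraph V) (x y a : V)
    (b : {v : V // v ≠ x ∧ v ≠ y}) :
    (glueExt H x y).Adj (Sum.inl a) (Sum.inr b) ↔ (a ≠ x ∧ a ≠ y) ∨ H.Adj a b.1 := by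
  simp only [glueExt, fromRel_adj]
  constructor
  · rintro ⟨hne, h | h⟩ <;> exact h
  · intro h
    exact ⟨by simp, Or.inl h⟩

lemma glue_inr_inr {V : Type*} (H : SimpleGraph V) (x y : V)
    (a b : {v : V // v ≠ x ∧ v ≠ y}) :
    (glueExt H x y).Adj (Sum.inr a) (Sum.inr b) ↔ H.Adj a.1 b.1 := by
  simp only [glueExt, fromRel_adj]
  constructor
  · rintro ⟨hne, h | h⟩
    · exact h
    · exact h.symm
  · intro h
    refine ⟨?_, Or.inl h⟩
    simp only [ne_eq, Sum.inr.injEq]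
    exact fun hab => h.ne (congrArg Subtype.val hab)

open scoped Classical in
/-- The right-copy inclusion. -/
noncomputable def rmap {V : Type*} (x y : V) (v : V) : V ⊕ {v : V // v ≠ x ∧ v ≠ y} :=
  if hx : v = x then Sum.inl x
  else if hy : v = y then Sum.inl y
  else Sum.inr ⟨v, hx, hy⟩

open scoped Classical in
lemma rmap_inj {V : Type*} (x y : V) : Function.Injective (rmap x y) := by
  intro a b hab
  unfold rmap at hab
  split_ifs at hab <;> simp_all [Sum.inl.injEq, Sum.inr.injEq]

open scoped Classical in
lemma rmap_adj {V : Type*} (H : SimpleGraph V) (x y : V) (v w : V) :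
    (glueExt H x y).Adj (rmap x y v) (rmap x y w) ↔ H.Adj v w := by
  unfold rmap
  split_ifs with h1 h2 h3 h4 h5 <;>
    subst_vars <;>
    simp_all [glue_inl_inl, glue_inl_inr, glue_inr_inr, adj_comm]

open scoped Classical in
lemma rmap_eq_inl {V : Type*} {x y : V} {v c : V} (h : rmap x y v = Sum.inl c) :
    (v = x ∨ v = y) ∧ c = v := by
  unfold rmap at h
  split_ifs at h with h1 h2 <;> simp_all

lemma leftIso {V : Type*} (H : SimpleGraph V) (x y : V)
    (f : Sym2 (V ⊕ {v : V // v ≠ x ∧ v ≠ y}))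
    (hf : ∀ a b : V, s((Sum.inl a : V ⊕ {v : V // v ≠ x ∧ v ≠ y}), Sum.inl b) ≠ f) :
    Nonempty ((((glueExt H x y).deleteEdges {f}).induce (Set.range Sum.inl)) ≃g H) := by
  refine ⟨(RelIso.mk (Equiv.ofInjective _ Sum.inl_injective) ?_ :
    H ≃g (((glueExt H x y).deleteEdges {f}).induce (Set.range Sum.inl))).symm⟩
  intro a b
  simp only [comap_adj, Function.Embedding.coe_subtype, Equiv.ofInjective_apply,
    deleteEdges_adj, Set.mem_singleton_iff, glue_inl_inl]
  exact and_iff_left (hf a b)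

open scoped Classical in
lemma rightIso {V : Type*} (H : SimpleGraph V) (x y : V)
    (f : Sym2 (V ⊕ {v : V // v ≠ x ∧ v ≠ y}))
    (hf : ∀ v w : V, H.Adj v w → s(rmap x y v, rmap x y w) ≠ f) :
    Nonempty ((((glueExt H x y).deleteEdges {f}).induce (Set.range (rmap x y))) ≃g H) := by
  refine ⟨(RelIso.mk (Equiv.ofInjective _ (rmap_inj x y)) ?_ :
    H ≃g (((glueExt H x y).deleteEdges {f}).induce (Set.range (rmap x y)))).symm⟩
  intro a b
  simp only [comap_adj, Function.Embedding.coe_subtype, Equiv.ofInjective_apply,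
    deleteEdges_adj, Set.mem_singleton_iff, rmap_adj]
  exact ⟨fun h => h.1, fun h => ⟨h, hf a b h⟩⟩

theorem stmt18 {V : Type*} [Fintype V] (H : SimpleGraph V) (hH : ¬ H.Connected)
    (hiso : ∀ v : V, ∃ w : V, H.Adj v w) (x y : V) (he : H.Adj x y) :
    ∀ f ∈ (glueExt H x y).edgeSet, f ≠ s(Sum.inl x, Sum.inl y) →
      ¬ IsHFree ((glueExt H x y).deleteEdges {f}) H := by
  classical
  intro f hf hfe
  simp only [IsHFree, not_forall, not_isEmpty_iff]
  clear hf
  induction f using Sym2.ind with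
  | _ p q =>
    match p, q with
    | Sum.inl c, Sum.inl d =>
      refine ⟨Set.range (rmap x y), rightIso H x y _ ?_⟩
      intro v w hvw heq
      rcases Sym2.eq_iff.mp heq with ⟨h1, h2⟩ | ⟨h1, h2⟩
      · obtain ⟨hv, rfl⟩ := rmap_eq_inl h1
        obtain ⟨hw, rfl⟩ := rmap_eq_inl h2
        apply hfe
        rcases hv with rfl | rfl <;> rcases hw with rfl | rfl
        · exact absurd rfl hvw.ne
        · rfl
        · exact Sym2.eq_swap
        · exact absurd rfl hvw.ne
      · obtain ⟨hv, rfl⟩ := rmap_eq_inl h1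
        obtain ⟨hw, rfl⟩ := rmap_eq_inl h2
        apply hfe
        rcases hv with rfl | rfl <;> rcases hw with rfl | rfl
        · exact absurd rfl hvw.ne
        · exact Sym2.eq_swap
        · rfl
        · exact absurd rfl hvw.ne
    | Sum.inl c, Sum.inr d =>
      exact ⟨Set.range Sum.inl, leftIso H x y _ (by intro a b h; simp [Sym2.eq_iff] at h)⟩
    | Sum.inr c, Sum.inl d =>
      exact ⟨Set.range Sum.inl, leftIso H x y _ (by intro a b h; simp [Sym2.eq_iff] at h)⟩
    | Sum.inr c, Sum.inr d =>
      exact ⟨Set.range Sum.inl, leftIso H x y _ (by intro a b h; simp [Sym2.eq_iff] at h)⟩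
end
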